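/- For M ∈ SL(2, ℚ_p) with an Iwasawa decomposition M = N·A·K where N = [[1, x],[0,1]], A = diag(y, 1/y), and K ∈ SL(2, ℤ_p), the p-adic norm of y satisfies |y|_p = (max{|M_{21}|_p, |M_{22}|_p})^{−1}. -/
import Mathlib


/-- For `M ∈ SL(2, ℚ_p)` with Iwasawa decomposition `M = [[1,x],[0,1]]·diag(y,1/y)·K`,
`K ∈ SL(2, ℤ_p)`, the norm of the dilaton satisfies
`|y|_p = (max{|M₂₁|_p, |M₂₂|_p})⁻¹`. -/
theorem stmt_10 (p : ℕ) [Fact p.Prime]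
    (M N A K : Matrix (Fin 2) (Fin 2) ℚ_[p]) (x y : ℚ_[p])
    (hM : M.det = 1)
    (hN : N = !![1, x; 0, 1]) (hA : A = !![y, 0; 0, y⁻¹])
    (hK : ∀ i j, ‖K i j‖ ≤ 1) (hKdet : K.det = 1)
    (hdec : M = N * A * K) :
    ‖y‖ = (max ‖M 1 0‖ ‖M 1 1‖)⁻¹ := by
  subst hN hA hdec
  have hy : y ≠ 0 := by
    rintro rfl
    simp [Matrix.det_fin_two, Matrix.vecMul, dotProduct,
      Fin.sum_univ_two] at hM
  have h10 : (!![1, x; 0, 1] * !![y, 0; 0, y⁻¹] * K) 1 0 = y⁻¹ * K 1 0 := by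
    simp [Matrix.mul_apply, Fin.sum_univ_two]
  have h11 : (!![1, x; 0, 1] * !![y, 0; 0, y⁻¹] * K) 1 1 = y⁻¹ * K 1 1 := by
    simp [Matrix.mul_apply, Fin.sum_univ_two]
  rw [h10, h11, norm_mul, norm_mul]
  have hmax : max ‖K 1 0‖ ‖K 1 1‖ = 1 := by
    refine le_antisymm (max_le (hK 1 0) (hK 1 1)) ?_
    have hdet : (1 : ℚ_[p]) = K 0 0 * K 1 1 - K 0 1 * K 1 0 := by
      rw [← hKdet, Matrix.det_fin_two]
    have hna := Padic.nonarchimedean (K 0 0 * K 1 1) (-(K 0 1 * K 1 0))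
    rw [← sub_eq_add_neg, ← hdet] at hna
    simp only [norm_one, norm_neg, norm_mul] at hna
    have hA' : ‖K 0 0‖ * ‖K 1 1‖ ≤ max ‖K 1 0‖ ‖K 1 1‖ :=
      le_trans (mul_le_of_le_one_left (norm_nonneg _) (hK 0 0)) (le_max_right _ _)
    have hB' : ‖K 0 1‖ * ‖K 1 0‖ ≤ max ‖K 1 0‖ ‖K 1 1‖ :=
      le_trans (mul_le_of_le_one_left (norm_nonneg _) (hK 0 1)) (le_max_left _ _)
    exact le_trans hna (max_le hA' hB')
  rw [← mul_max_of_nonneg _ _ (norm_nonneg (y⁻¹)), hmax, mul_one, norm_inv, inv_inv]
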